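/- Let K be a field of characteristic zero, G a finite group, M ≤ G abelian with |M̂| = |M|, ω a normalized 2-cocycle on M̂ with associated twist J, and let {τ_ℓ}_{ℓ=1}^n be a set of representatives of the double cosets of M in G. Then K G = ⊕_{ℓ=1}^n K(Mτ_ℓM) as K-vector spaces, and each double-coset span is a subcoalgebra of the twisted group algebra (K G)_J, i.e., Δ_J(K(Mτ_ℓM)) ⊆ K(Mτ_ℓM) ⊗ K(Mτ_ℓM) for every ℓ. -/

import Mathlib

open scoped TensorProduct BigOperators
open MonoidAlgebra

noncomputable section

variable (K : Type) [Field K] {G : Type} [Group G]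

/-- The diagonal monoid homomorphism `g ↦ g ⊗ g`. -/
def diagHom : G →* (MonoidAlgebra K G ⊗[K] MonoidAlgebra K G) where
  toFun g := MonoidAlgebra.of K G g ⊗ₜ[K] MonoidAlgebra.of K G g
  map_one' := by simp [Algebra.TensorProduct.one_def, MonoidAlgebra.one_def]
  map_mul' g h := by simp [Algebra.TensorProduct.tmul_mul_tmul]

/-- The comultiplication `Δ` of the group algebra `K G`, determined by `Δ(g) = g ⊗ g`. -/
def comul : MonoidAlgebra K G →ₐ[K] (MonoidAlgebra K G ⊗[K] MonoidAlgebra K G) :=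
  MonoidAlgebra.lift K _ G (diagHom K)

/-- The primitive idempotent `e_φ^M ∈ K M ⊆ K G` attached to a character `φ` of a subgroup
`M` of `G`. -/
def idem (M : Subgroup G) (φ : ↥M →* Kˣ) : MonoidAlgebra K G :=
  (Nat.card M : K)⁻¹ • ∑ᶠ m : ↥M, ((φ m⁻¹ : Kˣ) : K) • MonoidAlgebra.of K G (m : G)

/-- The twist `J = Σ_{φ,ψ∈M̂} ω(φ,ψ)·e_φ^M ⊗ e_ψ^M ∈ K G ⊗ K G` associated to a
`2`-cocycle `ω` on `M̂`. -/
def Jtwist (M : Subgroup G) (ω : (↥M →* Kˣ) → (↥M →* Kˣ) → Kˣ) :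
    MonoidAlgebra K G ⊗[K] MonoidAlgebra K G :=
  ∑ᶠ φ : ↥M →* Kˣ, ∑ᶠ ψ : ↥M →* Kˣ,
    ((ω φ ψ : Kˣ) : K) • (idem K M φ ⊗ₜ[K] idem K M ψ)

/-- The `K`-linear span `K(MτM)` in `K G` of the double coset `MτM`. -/
def doubleCosetSpan (M : Subgroup G) (τ : G) :
    Submodule K (MonoidAlgebra K G) :=
  Submodule.span K
    {x : MonoidAlgebra K G | ∃ a ∈ M, ∃ b ∈ M, x = MonoidAlgebra.of K G (a * τ * b)}

/-! The double cosets of `M` partition the basis `G` of `K G`, so their spans form a direct sum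
decomposition. For the twisted coproduct, the twist `J` lies in the image of `K M ⊗ K M`, a
finite-dimensional subalgebra of `K G ⊗ K G`; the inverse of an element of a finite-dimensional
subalgebra (an Artinian ring) lies in the subalgebra again. Finally
`(m₁ ⊗ m₂)(g ⊗ g)(m₃ ⊗ m₄) = m₁gm₃ ⊗ m₂gm₄` and `M (MτM) M = MτM`, so multiplying
`Δ(K(MτM))` on both sides by elements of `K M ⊗ K M` stays inside `K(MτM) ⊗ K(MτM)`. -/

theorem Subalgebra.ringInverse_mem {F A : Type*} [Field F] [Ring A] [Algebra F A]
    (S : Subalgebra F A) [FiniteDimensional F S] {x : A} (hx : x ∈ S) : Ring.inverse x ∈ S := by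
  by_cases hunit : IsUnit x
  · have : IsArtinianRing S := IsArtinianRing.of_finite F S
    have hreg : IsRightRegular (⟨x, hx⟩ : S) := fun a b hab =>
      Subtype.ext (hunit.isRegular.right (congrArg Subtype.val hab))
    obtain ⟨u, hu⟩ := IsArtinianRing.isUnit_iff_isRightRegular.mpr hreg
    have hx' : x = (Units.map S.val.toMonoidHom u : A) := by simp [hu]
    rw [hx', Ring.inverse_unit, ← map_inv]
    exact (u⁻¹ : Sˣ).val.2
  · rw [Ring.inverse_non_unit x hunit]
    exact S.zero_mem

namespace MonoidAlgebra

theorem single_mem_supported {R α : Type*} [Semiring R] {s : Set α} {a : α} (b : R)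
    (h : a ∈ s) : single a b ∈ supported R R s :=
  Finsupp.single_mem_supported R b h

theorem disjoint_supported_supported {R α : Type*} [Semiring R] {s t : Set α}
    (h : Disjoint s t) : Disjoint (supported R R s) (supported R R t) := by
  rw [Submodule.disjoint_def]
  intro x hs ht
  have := Submodule.disjoint_def.mp (Finsupp.disjoint_supported_supported (M := R) (R := R) h)
  exact (coeffLinearEquiv R).map_eq_zero_iff.mp (this _ hs ht)

theorem isInternal_supported {R α ι : Type*} [Ring R] [DecidableEq ι] (C : ι → Set α)
    (hC : ∀ a, ∃! i, a ∈ C i) : DirectSum.IsInternal fun i => supported R R (C i) := by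
  refine DirectSum.isInternal_submodule_of_iSupIndep_of_iSup_eq_top (fun i => ?_) ?_
  · have hle : ⨆ (j) (_ : j ≠ i), supported R R (C j) ≤ supported R R (C i)ᶜ :=
      iSup₂_le fun j hji => supported_mono fun a haj hai =>
        hji ((hC a).unique haj hai)
    exact (disjoint_supported_supported disjoint_compl_right).mono_right hle
  · rw [eq_top_iff, ← (basis α R).span_eq, Submodule.span_le]
    rintro _ ⟨a, rfl⟩
    obtain ⟨i, hi, -⟩ := hC a
    exact Submodule.mem_iSup_of_mem i (single_mem_supported 1 hi)

end MonoidAlgebra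

open DoubleCoset
open scoped Pointwise

def tensorPairs (s t : Set G) : Set (MonoidAlgebra K G ⊗[K] MonoidAlgebra K G) :=
  Set.image2 (fun a b => of K G a ⊗ₜ[K] of K G b) s t

theorem tensorPairs_mul_tensorPairs_subset (s t s' t' : Set G) :
    tensorPairs K s t * tensorPairs K s' t' ⊆ tensorPairs K (s * s') (t * t') := by
  rintro _ ⟨_, ⟨a, ha, b, hb, rfl⟩, _, ⟨a', ha', b', hb', rfl⟩, rfl⟩
  exact ⟨a * a', Set.mul_mem_mul ha ha', b * b', Set.mul_mem_mul hb hb',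
    by simp [Algebra.TensorProduct.tmul_mul_tmul]⟩

theorem span_tensorPairs_mul_span_tensorPairs_le (s t s' t' : Set G) :
    Submodule.span K (tensorPairs K s t) * Submodule.span K (tensorPairs K s' t') ≤
      Submodule.span K (tensorPairs K (s * s') (t * t')) := by
  rw [Submodule.span_mul_span]
  exact Submodule.span_mono (tensorPairs_mul_tensorPairs_subset K s t s' t')

theorem tmul_mem_span_tensorPairs {s t : Set G} {x y : MonoidAlgebra K G}
    (hx : x ∈ supported K K s) (hy : y ∈ supported K K t) :
    x ⊗ₜ[K] y ∈ Submodule.span K (tensorPairs K s t) := by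
  rw [supported_eq_span_single] at hx hy
  have := Submodule.apply_mem_map₂
    (TensorProduct.mk K (MonoidAlgebra K G) (MonoidAlgebra K G)) hx hy
  rwa [Submodule.map₂_span_span, Set.image2_image_left, Set.image2_image_right] at this

theorem comul_of (g : G) : comul K (of K G g) = of K G g ⊗ₜ[K] of K G g :=
  lift_of _ _

theorem comul_mem_span_tensorPairs {s : Set G} {x : MonoidAlgebra K G}
    (hx : x ∈ supported K K s) : comul K x ∈ Submodule.span K (tensorPairs K s s) := by
  suffices supported K K s ≤ (Submodule.span K (tensorPairs K s s)).comap
      (comul K (G := G)).toLinearMap from this hx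
  rw [supported_eq_span_single, Submodule.span_le]
  rintro _ ⟨g, hg, rfl⟩
  exact Submodule.subset_span ⟨g, hg, g, hg, (comul_of K g).symm⟩

def tensorSquareSubalgebra (M : Subgroup G) :
    Subalgebra K (MonoidAlgebra K G ⊗[K] MonoidAlgebra K G) :=
  (Submodule.span K (tensorPairs K (M : Set G) M)).toSubalgebra
    (Submodule.subset_span (⟨1, M.one_mem, 1, M.one_mem,
      by simp [Algebra.TensorProduct.one_def, one_def]⟩ : 1 ∈ tensorPairs K (M : Set G) M))
    (fun _ _ hx hy => by
      have := span_tensorPairs_mul_span_tensorPairs_le K (M : Set G) M M M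
        (Submodule.mul_mem_mul hx hy)
      rwa [coe_mul_coe] at this)

instance (M : Subgroup G) [Finite M] : FiniteDimensional K (tensorSquareSubalgebra K M) :=
  FiniteDimensional.span_of_finite K
    ((Set.toFinite (M : Set G)).image2 _ (Set.toFinite (M : Set G)))

theorem idem_mem_supported (M : Subgroup G) (φ : M →* Kˣ) : idem K M φ ∈ supported K K M :=
  Submodule.smul_mem _ _ <| finsum_induction _ (zero_mem _) (fun _ _ => add_mem)
    fun m => Submodule.smul_mem _ _ (single_mem_supported 1 m.2)

theorem Jtwist_mem_tensorSquareSubalgebra (M : Subgroup G) (ω : (M →* Kˣ) → (M →* Kˣ) → Kˣ) :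
    Jtwist K M ω ∈ tensorSquareSubalgebra K M :=
  finsum_induction _ (zero_mem _) (fun _ _ => add_mem) fun φ =>
    finsum_induction _ (zero_mem _) (fun _ _ => add_mem) fun ψ =>
      Subalgebra.smul_mem _ (tmul_mem_span_tensorPairs K (idem_mem_supported K M φ)
        (idem_mem_supported K M ψ)) _

theorem doubleCosetSpan_eq_supported (M : Subgroup G) (τ : G) :
    doubleCosetSpan K M τ = supported K K (doubleCoset τ M M) := by
  rw [doubleCosetSpan, supported_eq_span_single]
  congr 1
  ext x
  constructor
  · rintro ⟨a, ha, b, hb, rfl⟩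
    exact ⟨_, mem_doubleCoset.mpr ⟨a, ha, b, hb, rfl⟩, rfl⟩
  · rintro ⟨g, hg, rfl⟩
    obtain ⟨a, ha, b, hb, rfl⟩ := mem_doubleCoset.mp hg
    exact ⟨a, ha, b, hb, rfl⟩

theorem subgroup_mul_doubleCoset_mul_subgroup (M : Subgroup G) (τ : G) :
    (M : Set G) * doubleCoset τ M M * M = doubleCoset τ M M := by
  rw [doubleCoset, ← mul_assoc, ← mul_assoc, coe_mul_coe, mul_assoc _ _ (M : Set G),
    coe_mul_coe]

theorem mul_comul_mul_mem_span_tensorPairs (M : Subgroup G) (τ : G)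
    {u w : MonoidAlgebra K G ⊗[K] MonoidAlgebra K G} {x : MonoidAlgebra K G}
    (hu : u ∈ tensorSquareSubalgebra K M) (hw : w ∈ tensorSquareSubalgebra K M)
    (hx : x ∈ supported K K (doubleCoset τ M M)) :
    u * comul K x * w ∈
      Submodule.span K (tensorPairs K (doubleCoset τ M M) (doubleCoset τ M M)) := by
  have := span_tensorPairs_mul_span_tensorPairs_le K _ _ _ _ <| Submodule.mul_mem_mul
    (span_tensorPairs_mul_span_tensorPairs_le K _ _ _ _ <|
      Submodule.mul_mem_mul hu (comul_mem_span_tensorPairs K hx)) hw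
  rwa [subgroup_mul_doubleCoset_mul_subgroup] at this

theorem stmt12 [Finite G] (M : Subgroup G)
    (ω : (↥M →* Kˣ) → (↥M →* Kˣ) → Kˣ)
    (n : ℕ) (T : Fin n → G)
    (hT : ∀ g : G, ∃! ℓ : Fin n, ∃ a ∈ M, ∃ b ∈ M, g = a * T ℓ * b) :
    DirectSum.IsInternal (fun ℓ : Fin n => doubleCosetSpan K M (T ℓ)) ∧
    ∀ ℓ : Fin n, ∀ x ∈ doubleCosetSpan K M (T ℓ),
      Jtwist K M ω * comul K x * Ring.inverse (Jtwist K M ω) ∈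
        Submodule.span K
          {z : MonoidAlgebra K G ⊗[K] MonoidAlgebra K G |
            ∃ a ∈ doubleCosetSpan K M (T ℓ), ∃ b ∈ doubleCosetSpan K M (T ℓ),
              z = a ⊗ₜ[K] b} := by
  simp only [doubleCosetSpan_eq_supported]
  have hpartition : ∀ g, ∃! ℓ, g ∈ doubleCoset (T ℓ) M M := by
    simpa only [mem_doubleCoset, SetLike.mem_coe] using hT
  refine ⟨isInternal_supported _ hpartition, fun ℓ x hx => ?_⟩
  have hJ := Jtwist_mem_tensorSquareSubalgebra K M ω
  refine Submodule.span_mono ?_ <| mul_comul_mul_mem_span_tensorPairs K M (T ℓ) hJ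
    (Subalgebra.ringInverse_mem _ hJ) hx
  rintro _ ⟨a, ha, b, hb, rfl⟩
  exact ⟨_, single_mem_supported 1 ha, _, single_mem_supported 1 hb, rfl⟩
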